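/- Over the complex numbers, the parametrized change of basis E₁ᵗ=te₁, E₂ᵗ=t⁻¹e₂, E₃ᵗ=e₃, E₄ᵗ=e₄, E₅ᵗ=e₅, E₆ᵗ=e₆ applied to the algebra B_{6,3} ([e₁,e₂]=e₃, [e₃,e₄]=e₅, [e₁,e₃]=e₆, [e₄,e₅]=e₆) yields structure constants that are polynomial in t and converge, as t → 0, to the structure constants of B_{6,2} ([e₁,e₂]=e₃, [e₃,e₄]=e₅, [e₄,e₅]=e₆); hence the bracket [E_iᵗ, E_jᵗ] expressed in the basis (E_kᵗ) satisfies: [E₁ᵗ,E₂ᵗ]=E₃ᵗ, [E₃ᵗ,E₄ᵗ]=E₅ᵗ, [E₄ᵗ,E₅ᵗ]=E₆ᵗ, [E₁ᵗ,E₃ᵗ]=tE₆ᵗ, with all other brackets of basis vectors zero. -/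
import Mathlib


/-- The bracket of the 6-dimensional algebra `B_{6,3}` over `ℂ`: nonzero products
`[e₁,e₂]=e₃`, `[e₃,e₄]=e₅`, `[e₁,e₃]=e₆`, `[e₄,e₅]=e₆` (0-indexed coordinates). -/
def b63C (x y : Fin 6 → ℂ) : Fin 6 → ℂ :=
  ![0, 0, x 0 * y 1 - x 1 * y 0, 0, x 2 * y 3 - x 3 * y 2,
    (x 0 * y 2 - x 2 * y 0) + (x 3 * y 4 - x 4 * y 3)]

/-- The parametrized basis `E₁ᵗ=te₁, E₂ᵗ=t⁻¹e₂, E₃ᵗ=e₃, E₄ᵗ=e₄, E₅ᵗ=e₅, E₆ᵗ=e₆`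
(0-indexed here). -/
noncomputable def Ebasis (t : ℂ) : Fin 6 → (Fin 6 → ℂ) :=
  fun i => Pi.single i (![t, t⁻¹, 1, 1, 1, 1] i)

lemma Ebasis_apply (t : ℂ) (i j : Fin 6) :
    Ebasis t i j = if j = i then ![t, t⁻¹, 1, 1, 1, 1] i else 0 := by
  simp [Ebasis, Pi.single_apply]

/-- In the parametrized basis, the structure constants of `B_{6,3}` are polynomial in `t`
and degenerate, as `t → 0`, to those of `B_{6,2}`:
`[E₁ᵗ,E₂ᵗ]=E₃ᵗ`, `[E₃ᵗ,E₄ᵗ]=E₅ᵗ`, `[E₄ᵗ,E₅ᵗ]=E₆ᵗ`, `[E₁ᵗ,E₃ᵗ]=tE₆ᵗ`, all other brackets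
of the basis vectors being zero. -/
theorem stmt_17 (t : ℂ) (ht : t ≠ 0) :
    b63C (Ebasis t 0) (Ebasis t 1) = Ebasis t 2 ∧
    b63C (Ebasis t 2) (Ebasis t 3) = Ebasis t 4 ∧
    b63C (Ebasis t 3) (Ebasis t 4) = Ebasis t 5 ∧
    b63C (Ebasis t 0) (Ebasis t 2) = t • Ebasis t 5 ∧
    (∀ i j : Fin 6,
      (i, j) ∉ ({(0, 1), (1, 0), (2, 3), (3, 2), (3, 4), (4, 3), (0, 2), (2, 0)} :
        Set (Fin 6 × Fin 6)) →
      b63C (Ebasis t i) (Ebasis t j) = 0) := by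
  refine ⟨?_, ?_, ?_, ?_, ?_⟩
  · funext k; fin_cases k <;>
      simp [b63C, Ebasis_apply, mul_inv_cancel₀ ht] <;> rfl
  · funext k; fin_cases k <;> simp [b63C, Ebasis_apply] <;> rfl
  · funext k; fin_cases k <;> simp [b63C, Ebasis_apply] <;> rfl
  · funext k; fin_cases k <;> simp [b63C, Ebasis_apply] <;> rw [show (![t, t⁻¹, 1, 1, 1, 1] : Fin 6 → ℂ) 5 = 1 from rfl, show (![0, 0, 0, 0, 0, t] : Fin 6 → ℂ) 5 = t from rfl] <;> ring
  · intro i j hij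
    fin_cases i <;> fin_cases j <;>
      simp_all [b63C, Ebasis_apply] <;>
      (funext k; fin_cases k <;> simp [b63C, Ebasis_apply])
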